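/- Let Ω ⊆ ℝ^d be a domain whose boundary Γ is Ahlfors s-regular with s ∈ (0, d−1). Then for every x ∈ Γ and every r > 0 one has |Ω ∩ B(x;r)| = |B(x;r)|; equivalently, the interior of the complement of Ω is empty. -/

import Mathlib

open MeasureTheory Metric Set
open scoped ENNReal NNReal

noncomputable section

/-- Euclidean space ℝ^d. -/
abbrev Euc (d : ℕ) : Type := EuclideanSpace ℝ (Fin d)


/-- The boundary set `Γ` is (locally uniformly) Ahlfors `s`-regular. -/
def AhlforsRegular (d : ℕ) (Γ : Set (Euc d)) (s : ℝ) : Prop :=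
  ∃ μ : Measure (Euc d), μ.Regular ∧ μ Γᶜ = 0 ∧
    ∀ x₀ ∈ Γ, ∀ R₀ : ℝ, 0 < R₀ → ∃ c > (0 : ℝ),
      ∀ x ∈ Γ ∩ ball x₀ R₀, ∀ r : ℝ, 0 < r → r < 2 * R₀ →
        ENNReal.ofReal (c⁻¹ * r ^ s) ≤ μ (Γ ∩ ball x₀ R₀ ∩ ball x r) ∧
        μ (Γ ∩ ball x₀ R₀ ∩ ball x r) ≤ ENNReal.ofReal (c * r ^ s)

/-!
Ahlfors regularity of `Γ = ∂Ω` and a packing argument show that every bounded part of `Γ` is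
covered by `O(r ^ (-s))` balls of radius `r`; as `s < d`, this makes `Γ` Lebesgue-null.
If `Ωᶜ` contained a ball `B(y, ρ)`, pick `x ∈ Ω`: every segment from `x` to the `(d - 1)`-disc of
radius `ρ` through `y` orthogonal to `y - x` crosses `Γ` at a definite distance from `x`, and the
central projection from `x` onto the hyperplane of that disc is Lipschitz there. So the disc would
be a Lipschitz image of a bounded part of `Γ`, hence covered by `O(r ^ (-s))` balls of radius `r`,
which is impossible in dimension `d - 1 > s`. Thus `Ωᶜ` has empty interior, so `Ωᶜ ⊆ Γ` is null.
-/

open Filter Module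
open scoped Topology

section Covering

open Function

variable {X Y : Type*}

theorem IsPreconnected.inter_frontier_nonempty [TopologicalSpace X] {s t : Set X}
    (hs : IsPreconnected s) (hst : (s ∩ t).Nonempty) (hst' : (s \ t).Nonempty) :
    (s ∩ frontier t).Nonempty := by
  by_contra! h
  have hcover : s ⊆ interior t ∪ (closure t)ᶜ := fun z hz => by
    by_contra! hz'
    simp only [mem_union, mem_compl_iff, not_or, not_not] at hz'
    exact h.subset ⟨hz, hz'.2, hz'.1⟩
  obtain ⟨z, -, hzt, hzt'⟩ := hs _ _ isOpen_interior isClosed_closure.isOpen_compl hcover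
    (by
      obtain ⟨z, hzs, hzt⟩ := hst
      exact ⟨z, hzs, (hcover hzs).resolve_right fun hz => hz (subset_closure hzt)⟩)
    (by
      obtain ⟨z, hzs, hzt⟩ := hst'
      exact ⟨z, hzs, (hcover hzs).resolve_left fun hz => hzt (interior_subset hz)⟩)
  exact hzt' (interior_subset_closure hzt)

theorem coveringNumber_image_le_of_lipschitzOnWith [PseudoEMetricSpace X] [PseudoEMetricSpace Y]
    {f : X → Y} {K ε : ℝ≥0} {A : Set X} (hf : LipschitzOnWith K f A) :
    coveringNumber (K * ε) (f '' A) ≤ coveringNumber ε A := by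
  simp only [coveringNumber, le_iInf_iff]
  intro C hCA hC
  have hcover : IsCover (K * ε) (f '' A) (f '' C) := by
    rintro _ ⟨x, hx, rfl⟩
    obtain ⟨c, hc, hxc⟩ := hC hx
    exact ⟨f c, mem_image_of_mem f hc, (hf hx (hCA hc)).trans (by push_cast; gcongr; exact hxc)⟩
  exact (iInf_le _ (f '' C)).trans <| (iInf_le _ (image_mono hCA)).trans <|
    (iInf_le _ hcover).trans (encard_image_le f C)

theorem packingNumber_mul_le_measure_univ [PseudoMetricSpace X] [MeasurableSpace X]
    [OpensMeasurableSpace X] (ν : Measure X) {A : Set X} {ε : ℝ≥0} {m : ℝ≥0∞}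
    (hm : ∀ x ∈ A, m ≤ ν (ball x ((ε : ℝ) / 2))) :
    (packingNumber ε A : ℝ≥0∞) * m ≤ ν univ := by
  simp only [packingNumber, ENat.toENNReal_iSup, ENNReal.iSup_mul, iSup_le_iff]
  intro C hCA hC
  have hdisj : Pairwise (Disjoint on fun x : C => ball (x : X) ((ε : ℝ) / 2)) := by
    intro x y hxy
    refine ball_disjoint_ball ?_
    have : (ε : ℝ≥0∞) < edist (x : X) y := hC x.2 y.2 (Subtype.coe_ne_coe.2 hxy)
    rw [edist_nndist, ENNReal.coe_lt_coe, ← NNReal.coe_lt_coe, coe_nndist] at this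
    linarith
  calc (C.encard : ℝ≥0∞) * m = ∑' _ : C, m := (ENNReal.tsum_const m).symm
    _ ≤ ∑' x : C, ν (ball (x : X) ((ε : ℝ) / 2)) := ENNReal.tsum_le_tsum fun x => hm x (hCA x.2)
    _ ≤ ν (⋃ x : C, ball (x : X) ((ε : ℝ) / 2)) :=
        tsum_meas_le_meas_iUnion_of_disjoint ν (fun _ => measurableSet_ball) hdisj
    _ ≤ ν univ := measure_mono (subset_univ _)

theorem measure_le_coveringNumber_mul_measure_closedBall {E : Type*} [NormedAddCommGroup E]
    [MeasurableSpace E] [BorelSpace E]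
    (μ : Measure E) [μ.IsAddHaarMeasure] (A : Set E) {ε : ℝ≥0} (hε : 0 < ε) :
    μ A ≤ coveringNumber ε A * μ (closedBall 0 ε) := by
  by_cases h : coveringNumber ε A = ⊤
  · rw [h, ENat.toENNReal_top, ENNReal.top_mul (measure_closedBall_pos μ 0 (by positivity)).ne']
    exact le_top
  obtain ⟨C, -, hCfin, hC, hCcard⟩ := exists_set_encard_eq_coveringNumber h
  calc μ A ≤ μ (⋃ y ∈ C, closedBall y ε) := measure_mono hC.subset_iUnion_closedBall
    _ ≤ ∑' y : C, μ (closedBall y ε) := measure_biUnion_le μ hCfin.countable _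
    _ = coveringNumber ε A * μ (closedBall 0 ε) := by
        simp only [Measure.addHaar_closedBall_center μ, ENNReal.tsum_const, ← hCcard]
        rfl

end Covering

def BoxCountingBound {X : Type*} [PseudoMetricSpace X] (s : ℝ) (A : Set X) : Prop :=
  ∃ (C : ℝ) (ε₀ : ℝ≥0), 0 < ε₀ ∧ ∀ ε : ℝ≥0, 0 < ε → ε ≤ ε₀ →
    (coveringNumber ε A : ℝ≥0∞) ≤ ENNReal.ofReal (C * (ε : ℝ) ^ (-s))

namespace BoxCountingBound

variable {X Y : Type*} [PseudoMetricSpace X] [PseudoMetricSpace Y] {s : ℝ} {A : Set X}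

theorem image {f : X → Y} {K : ℝ≥0} (hA : BoxCountingBound s A) (hf : LipschitzOnWith K f A) :
    BoxCountingBound s (f '' A) := by
  obtain ⟨C, ε₀, hε₀, hC⟩ := hA
  -- rescale by `K + 1` rather than `K`, which may vanish
  have hK : (0 : ℝ) < K + 1 := by positivity
  refine ⟨C * ((K : ℝ) + 1) ^ s, ε₀, hε₀, fun ε hε hεε₀ => ?_⟩
  have hδ : ε / (K + 1) ≤ ε := div_le_self ε.2 (le_add_of_nonneg_left K.2)
  calc (coveringNumber ε (f '' A) : ℝ≥0∞)
      = coveringNumber ((K + 1) * (ε / (K + 1))) (f '' A) := by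
        rw [mul_div_cancel₀ _ (by positivity)]
    _ ≤ coveringNumber (ε / (K + 1)) A := by
        exact_mod_cast coveringNumber_image_le_of_lipschitzOnWith (hf.weaken (by simp))
    _ ≤ ENNReal.ofReal (C * ((ε / (K + 1) : ℝ≥0) : ℝ) ^ (-s)) :=
        hC _ (by positivity) (hδ.trans hεε₀)
    _ = ENNReal.ofReal (C * ((K : ℝ) + 1) ^ s * (ε : ℝ) ^ (-s)) := by
        congr 1
        push_cast
        rw [Real.div_rpow (by positivity) hK.le, Real.rpow_neg hK.le, div_inv_eq_mul]
        ring

variable {E : Type*} [NormedAddCommGroup E] [NormedSpace ℝ E] [FiniteDimensional ℝ E]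
  {s : ℝ} {A : Set E}

theorem measure_eq_zero [MeasurableSpace E] [BorelSpace E] (μ : Measure E) [μ.IsAddHaarMeasure]
    (hA : BoxCountingBound s A) (hs : s < finrank ℝ E) : μ A = 0 := by
  obtain ⟨C, ε₀, hε₀, hC⟩ := hA
  set n := finrank ℝ E
  have hbound : ∀ ε : ℝ≥0, 0 < ε → ε ≤ ε₀ →
      μ A ≤ ENNReal.ofReal (C * (ε : ℝ) ^ ((n : ℝ) - s)) * μ (closedBall 0 1) := by
    intro ε hε hεε₀
    calc μ A ≤ coveringNumber ε A * μ (closedBall 0 ε) :=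
          measure_le_coveringNumber_mul_measure_closedBall μ A hε
      _ ≤ ENNReal.ofReal (C * (ε : ℝ) ^ (-s)) *
            (ENNReal.ofReal ((ε : ℝ) ^ n) * μ (closedBall 0 1)) := by
          rw [Measure.addHaar_closedBall' μ 0 ε.coe_nonneg]
          gcongr
          exact hC ε hε hεε₀
      _ = ENNReal.ofReal (C * (ε : ℝ) ^ ((n : ℝ) - s)) * μ (closedBall 0 1) := by
          rw [← mul_assoc, ← ENNReal.ofReal_mul' (by positivity), sub_eq_neg_add,
            Real.rpow_add (by positivity), Real.rpow_natCast, mul_assoc]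
  have hlim : Tendsto (fun ε : ℝ≥0 => ENNReal.ofReal (C * (ε : ℝ) ^ ((n : ℝ) - s)) *
      μ (closedBall 0 1)) (𝓝[>] 0) (𝓝 0) := by
    have hp : 0 < (n : ℝ) - s := sub_pos.2 hs
    have hpow : Tendsto (fun ε : ℝ≥0 => (ε : ℝ) ^ ((n : ℝ) - s)) (𝓝[>] 0) (𝓝 0) := by
      simpa [Real.zero_rpow hp.ne'] using
        ((NNReal.continuous_coe.tendsto 0).rpow_const (Or.inr hp.le)).mono_left nhdsWithin_le_nhds
    simpa using ENNReal.Tendsto.mul_const (ENNReal.tendsto_ofReal (hpow.const_mul C))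
      (Or.inr measure_closedBall_lt_top.ne)
  refine le_antisymm (ge_of_tendsto hlim ?_) zero_le
  filter_upwards [Ioc_mem_nhdsGT hε₀] with ε hε using hbound ε hε.1 hε.2

theorem interior_eq_empty (hA : BoxCountingBound s A) (hs : s < finrank ℝ E) :
    interior A = ∅ := by
  borelize E
  by_contra h
  exact (Measure.measure_pos_of_nonempty_interior Measure.addHaar (nonempty_iff_ne_empty.2 h)).ne'
    (hA.measure_eq_zero _ hs)

end BoxCountingBound

theorem measure_eq_zero_of_forall_boxCountingBound {E : Type*} [NormedAddCommGroup E]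
    [NormedSpace ℝ E] [FiniteDimensional ℝ E] [MeasurableSpace E] [BorelSpace E]
    (μ : Measure E) [μ.IsAddHaarMeasure] {s : ℝ} {Γ : Set E}
    (hΓ : ∀ A ⊆ Γ, Bornology.IsBounded A → BoxCountingBound s A) (hs : s < finrank ℝ E) :
    μ Γ = 0 := by
  refine measure_mono_null (fun z hz => ?_) <| measure_iUnion_null fun n : ℕ =>
    (hΓ (Γ ∩ closedBall 0 n) inter_subset_left
      (isBounded_closedBall.subset inter_subset_right)).measure_eq_zero μ hs
  obtain ⟨n, hn⟩ := exists_nat_ge ‖z‖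
  exact mem_iUnion.2 ⟨n, hz, mem_closedBall_zero_iff.2 hn⟩

theorem AhlforsRegular.boxCountingBound {d : ℕ} {Γ : Set (Euc d)} {s : ℝ}
    (h : AhlforsRegular d Γ s) {A : Set (Euc d)} (hAΓ : A ⊆ Γ) (hA : Bornology.IsBounded A) :
    BoxCountingBound s A := by
  rcases A.eq_empty_or_nonempty with rfl | ⟨x₀, hx₀⟩
  · exact ⟨0, 1, one_pos, fun ε _ _ => by simp⟩
  obtain ⟨R₀, hAR₀⟩ := hA.subset_ball x₀
  have hR₀ : 0 < R₀ := pos_of_mem_ball (hAR₀ hx₀)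
  obtain ⟨μ, -, -, hμ⟩ := h
  obtain ⟨c, hc, hbounds⟩ := hμ x₀ (hAΓ hx₀) R₀ hR₀
  have hAG : A ⊆ Γ ∩ ball x₀ R₀ := fun z hz => ⟨hAΓ hz, hAR₀ hz⟩
  refine ⟨c ^ 2 * (2 * R₀) ^ s, R₀.toNNReal, by simpa using hR₀, fun ε hε hεR₀ => ?_⟩
  have hε' : (0 : ℝ) < ε := hε
  have hεR : (ε : ℝ) ≤ R₀ := (Real.le_toNNReal_iff_coe_le hR₀.le).1 hεR₀
  set m := ENNReal.ofReal (c⁻¹ * ((ε : ℝ) / 2) ^ s)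
  have hm : m ≠ 0 := by positivity
  -- `ε / 2`-balls around an `ε`-separated subset of `A` are disjoint, each carries `μ`-mass
  -- `≥ c⁻¹ (ε / 2) ^ s` inside `Γ ∩ ball x₀ R₀`, and that set has mass `≤ c R₀ ^ s`.
  have hpack : (packingNumber ε A : ℝ≥0∞) * m ≤ ENNReal.ofReal (c * R₀ ^ s) := by
    calc _ ≤ μ.restrict (Γ ∩ ball x₀ R₀) univ := packingNumber_mul_le_measure_univ _ fun z hz => by
          rw [Measure.restrict_apply measurableSet_ball, inter_comm]
          exact (hbounds z (hAG hz) _ (by positivity) (by linarith)).1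
      _ = μ (Γ ∩ ball x₀ R₀ ∩ ball x₀ R₀) := by
          rw [Measure.restrict_apply_univ, inter_assoc, inter_self]
      _ ≤ _ := (hbounds x₀ (hAG hx₀) R₀ hR₀ (by linarith)).2
  calc (coveringNumber ε A : ℝ≥0∞) ≤ packingNumber ε A :=
        ENat.toENNReal_le.2 (coveringNumber_le_packingNumber ε A)
    _ ≤ ENNReal.ofReal (c * R₀ ^ s) / m :=
        (ENNReal.le_div_iff_mul_le (Or.inl hm) (Or.inl ENNReal.ofReal_ne_top)).2 hpack
    _ = ENNReal.ofReal (c ^ 2 * (2 * R₀) ^ s * (ε : ℝ) ^ (-s)) := by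
        rw [← ENNReal.ofReal_div_of_pos (by positivity)]
        congr 1
        rw [Real.div_rpow hε'.le zero_le_two, Real.mul_rpow zero_le_two hR₀.le,
          Real.rpow_neg hε'.le]
        field_simp

section CentralProjection

open scoped RealInnerProductSpace

variable {E : Type*} [NormedAddCommGroup E] [InnerProductSpace ℝ E]

/-- The central projection from `x` onto the affine hyperplane `{w | ⟪e, w - x⟫ = c}`. -/
def centralProjection (x e : E) (c : ℝ) (z : E) : E :=
  x + (c / ⟪e, z - x⟫) • (z - x)

theorem centralProjection_add_smul {x e w : E} {c t : ℝ} (hw : ⟪e, w - x⟫ = c) (hc : c ≠ 0)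
    (ht : t ≠ 0) : centralProjection x e c (x + t • (w - x)) = w := by
  rw [centralProjection, add_sub_cancel_left, inner_smul_right, hw, smul_smul,
    show c / (t * c) * t = 1 by field_simp, one_smul, add_sub_cancel]

theorem lipschitzOnWith_centralProjection (x e : E) {a c R : ℝ} (ha : 0 < a) :
    LipschitzOnWith (|c| / a + |c| * ‖e‖ * R / a ^ 2).toNNReal (centralProjection x e c)
      {z | a ≤ ⟪e, z - x⟫ ∧ ‖z - x‖ ≤ R} := by
  refine LipschitzOnWith.of_dist_le' fun z₁ ⟨h₁a, _⟩ z₂ ⟨h₂a, h₂R⟩ => ?_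
  set q₁ := ⟪e, z₁ - x⟫
  set q₂ := ⟪e, z₂ - x⟫
  have hq₁ : 0 < q₁ := ha.trans_le h₁a
  have hq₂ : 0 < q₂ := ha.trans_le h₂a
  have hsplit : centralProjection x e c z₁ - centralProjection x e c z₂ =
      (c / q₁) • (z₁ - z₂) + (c / q₁ - c / q₂) • (z₂ - x) := by
    simp only [centralProjection]
    module
  have hq : |q₂ - q₁| ≤ ‖e‖ * ‖z₁ - z₂‖ := by
    have : q₂ - q₁ = ⟪e, z₂ - z₁⟫ := by
      simp only [q₁, q₂, ← inner_sub_right, sub_sub_sub_cancel_right]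
    rw [this, norm_sub_rev]
    exact abs_real_inner_le_norm e _
  have hcoeff : |c / q₁ - c / q₂| ≤ |c| * (‖e‖ * ‖z₁ - z₂‖) / a ^ 2 := by
    rw [show c / q₁ - c / q₂ = c * (q₂ - q₁) / (q₁ * q₂) by field_simp, abs_div, abs_mul,
      abs_of_pos (mul_pos hq₁ hq₂)]
    gcongr
    nlinarith
  rw [dist_eq_norm, dist_eq_norm, hsplit]
  calc ‖(c / q₁) • (z₁ - z₂) + (c / q₁ - c / q₂) • (z₂ - x)‖
      ≤ |c / q₁| * ‖z₁ - z₂‖ + |c / q₁ - c / q₂| * ‖z₂ - x‖ := by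
        refine (norm_add_le _ _).trans_eq ?_
        rw [norm_smul, norm_smul, Real.norm_eq_abs, Real.norm_eq_abs]
    _ ≤ |c| / a * ‖z₁ - z₂‖ + |c| * (‖e‖ * ‖z₁ - z₂‖) / a ^ 2 * R := by
        rw [abs_div, abs_of_pos hq₁]
        gcongr
    _ = (|c| / a + |c| * ‖e‖ * R / a ^ 2) * ‖z₁ - z₂‖ := by ring

end CentralProjection

theorem exists_mem_frontier_add_smul {E : Type*} [NormedAddCommGroup E] [NormedSpace ℝ E]
    {Ω : Set E} {x w : E} {ε : ℝ} (hΩ : IsOpen Ω) (hε : 0 < ε) (hx : ball x ε ⊆ Ω)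
    (hw : w ∉ Ω) : ∃ t ∈ Icc (0 : ℝ) 1, x + t • (w - x) ∈ frontier Ω ∧ ε ≤ t * ‖w - x‖ := by
  obtain ⟨z, hz, hzΓ⟩ := (convex_segment x w).isPreconnected.inter_frontier_nonempty
    ⟨x, left_mem_segment ℝ x w, hx (mem_ball_self hε)⟩ ⟨w, right_mem_segment ℝ x w, hw⟩
  rw [segment_eq_image'] at hz
  obtain ⟨t, ht, rfl⟩ := hz
  refine ⟨t, ht, hzΓ, ?_⟩
  have hzΩ : x + t • (w - x) ∉ Ω := fun h => hΩ.inter_frontier_eq.subset ⟨h, hzΓ⟩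
  have hdist : ¬dist (x + t • (w - x)) x < ε := fun h => hzΩ (hx h)
  rwa [not_lt, dist_eq_norm, add_sub_cancel_left, norm_smul, Real.norm_of_nonneg ht.1] at hdist

open scoped RealInnerProductSpace in
theorem mem_image_centralProjection_frontier {E : Type*} [NormedAddCommGroup E]
    [InnerProductSpace ℝ E] {Ω : Set E} {x e w : E} {ε c R : ℝ} (hΩ : IsOpen Ω) (hε : 0 < ε)
    (hx : ball x ε ⊆ Ω) (hw : w ∉ Ω) (hc : 0 < c) (hwc : ⟪e, w - x⟫ = c) (hwR : ‖w - x‖ ≤ R) :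
    w ∈ centralProjection x e c '' (frontier Ω ∩ {z | ε * c / R ≤ ⟪e, z - x⟫ ∧ ‖z - x‖ ≤ R}) := by
  obtain ⟨t, ⟨ht0, ht1⟩, hzΓ, hεt⟩ := exists_mem_frontier_add_smul hΩ hε hx hw
  have htR : ε ≤ t * R := hεt.trans (mul_le_mul_of_nonneg_left hwR ht0)
  have hR : 0 < R := by nlinarith [norm_nonneg (w - x)]
  have ht : t ≠ 0 := by rintro rfl; linarith
  refine ⟨x + t • (w - x), ⟨hzΓ, ?_, ?_⟩, centralProjection_add_smul hwc hc.ne' ht⟩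
  · rw [add_sub_cancel_left, inner_smul_right, hwc, div_le_iff₀ hR]
    nlinarith
  · rw [add_sub_cancel_left, norm_smul, Real.norm_of_nonneg ht0]
    nlinarith [norm_nonneg (w - x)]

open scoped RealInnerProductSpace in
theorem interior_compl_eq_empty_of_forall_boxCountingBound {E : Type*} [NormedAddCommGroup E]
    [InnerProductSpace ℝ E] [FiniteDimensional ℝ E] {Ω : Set E} {s : ℝ} (hΩ : IsOpen Ω)
    (hne : Ω.Nonempty) (hs : s + 1 < finrank ℝ E)
    (hΓ : ∀ A ⊆ frontier Ω, Bornology.IsBounded A → BoxCountingBound s A) :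
    interior Ωᶜ = ∅ := by
  by_contra! hint
  obtain ⟨y, hy⟩ := hint
  obtain ⟨ρ, hρ, hyρ⟩ := nhds_basis_closedBall.mem_iff.1 (mem_interior_iff_mem_nhds.1 hy)
  obtain ⟨x, hx⟩ := hne
  obtain ⟨ε, hε, hxε⟩ := isOpen_iff.1 hΩ x hx
  set e := y - x
  have he : e ≠ 0 := sub_ne_zero.2 fun h => hyρ (mem_closedBall_self hρ.le) (h ▸ hx)
  set F := (ℝ ∙ e)ᗮ
  set P := F.orthogonalProjectionOnto
  set R := ‖e‖ + ρ
  set A := frontier Ω ∩ {z | ε * ‖e‖ ^ 2 / R ≤ ⟪e, z - x⟫ ∧ ‖z - x‖ ≤ R}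
  have hF : s < finrank ℝ F := by
    rw [← (ℝ ∙ e).finrank_add_finrank_orthogonal, finrank_span_singleton he] at hs
    push_cast at hs
    linarith
  have hA : BoxCountingBound s ((P ∘ centralProjection x e (‖e‖ ^ 2)) '' A) :=
    (hΓ A inter_subset_left (isBounded_closedBall.subset fun z hz =>
      mem_closedBall_iff_norm.2 hz.2.2)).image
      (P.lipschitz.comp_lipschitzOnWith
        ((lipschitzOnWith_centralProjection x e (by positivity)).mono inter_subset_right))
  have hball : closedBall (P y) ρ ⊆ (P ∘ centralProjection x e (‖e‖ ^ 2)) '' A := by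
    intro u hu
    set v : E := ((u - P y : F) : E)
    have hv : ⟪e, v⟫ = 0 := Submodule.mem_orthogonal_singleton_iff_inner_right.1 (u - P y).2
    have hvρ : ‖v‖ ≤ ρ := by simpa [v, dist_eq_norm] using hu
    have hwx : y + v - x = e + v := by simp only [e]; abel
    obtain ⟨z, hzA, hz⟩ := mem_image_centralProjection_frontier (w := y + v) (c := ‖e‖ ^ 2)
      (R := R) hΩ hε hxε (hyρ (by simpa [dist_eq_norm] using hvρ)) (by positivity)
      (by rw [hwx, inner_add_right, hv, add_zero, real_inner_self_eq_norm_sq])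
      (by rw [hwx]; exact (norm_add_le e v).trans (add_le_add_right hvρ _))
    refine ⟨z, hzA, ?_⟩
    rw [Function.comp_apply, hz, map_add, F.orthogonalProjectionOnto_mem_subspace_eq_self,
      add_sub_cancel]
  have := interior_mono hball (ball_subset_interior_closedBall (mem_ball_self hρ))
  rwa [hA.interior_eq_empty hF] at this

theorem stmt_4_general (d : ℕ) (Ω : Set (Euc d)) (hΩopen : IsOpen Ω) (hΩconn : IsConnected Ω)
    (s : ℝ) (hsd : s < (d : ℝ) - 1)
    (hreg : AhlforsRegular d (frontier Ω) s) :
    (∀ x ∈ frontier Ω, ∀ r : ℝ, 0 < r →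
        volume (Ω ∩ ball x r) = volume (ball x r)) ∧
      interior Ωᶜ = ∅ := by
  have hΓ : ∀ A ⊆ frontier Ω, Bornology.IsBounded A → BoxCountingBound s A :=
    fun _ hA hAb => hreg.boxCountingBound hA hAb
  have hint : interior Ωᶜ = ∅ := interior_compl_eq_empty_of_forall_boxCountingBound hΩopen
    hΩconn.nonempty (by rw [finrank_euclideanSpace_fin]; linarith) hΓ
  have hcompl : Ωᶜ ⊆ frontier Ω := fun z hz => by
    rw [hΩopen.frontier_eq, closure_eq_compl_interior_compl, hint]
    exact ⟨notMem_empty z, hz⟩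
  have hnull : volume Ωᶜ = 0 := measure_mono_null hcompl <|
    measure_eq_zero_of_forall_boxCountingBound volume hΓ
      (by rw [finrank_euclideanSpace_fin]; linarith)
  exact ⟨fun x _ r _ => by rw [inter_comm]; exact measure_inter_conull hnull, hint⟩

/-- If the boundary of a domain `Ω ⊆ ℝ^d` is Ahlfors `s`-regular with `s ∈ (0, d-1)`,
then `|Ω ∩ B(x;r)| = |B(x;r)|` for all `x ∈ Γ` and `r > 0`; equivalently the interior
of the complement of `Ω` is empty. -/
theorem stmt_4 (d : ℕ) (Ω : Set (Euc d)) (hΩopen : IsOpen Ω) (hΩconn : IsConnected Ω)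
    (s : ℝ) (hs0 : 0 < s) (hsd : s < (d : ℝ) - 1)
    (hreg : AhlforsRegular d (frontier Ω) s) :
    (∀ x ∈ frontier Ω, ∀ r : ℝ, 0 < r →
        volume (Ω ∩ ball x r) = volume (ball x r)) ∧
      interior Ωᶜ = ∅ :=
  stmt_4_general d Ω hΩopen hΩconn s hsd hreg
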